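/- For m = 2 outcomes, C'_max(nA,nB,2) is contained in the closure of C_max(nA,nB,2); that is, the set of maximally entangled correlations with two outcomes is dense in the set of almost maximally entangled correlations with two outcomes. -/

import Mathlib

open scoped BigOperators

/-- A correlation with `nA` questions for Alice, `nB` questions for Bob and `m` outcomes. -/
def IsCorrelation {nA nB m : ℕ} (p : Fin nA → Fin nB → Fin m → Fin m → ℝ) : Prop :=
  (∀ x y i j, 0 ≤ p x y i j) ∧ ∀ x y, (∑ i, ∑ j, p x y i j) = 1

/-- A projection-valued measure with `m` outcomes on `ℂ^d`. -/
def IsPVM {d m : ℕ} (E : Fin m → Matrix (Fin d) (Fin d) ℂ) : Prop :=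
  (∀ i, (E i).IsHermitian) ∧ (∀ i, E i * E i = E i) ∧ (∑ i, E i = 1)

/-- The set `C_{max,d}(nA,nB,m)` of maximally entangled correlations in dimension `d`. -/
def CmaxD (nA nB m d : ℕ) : Set (Fin nA → Fin nB → Fin m → Fin m → ℝ) :=
  {p | IsCorrelation p ∧
    ∃ (E : Fin nA → Fin m → Matrix (Fin d) (Fin d) ℂ)
      (F : Fin nB → Fin m → Matrix (Fin d) (Fin d) ℂ),
      (∀ x, IsPVM (E x)) ∧ (∀ y, IsPVM (F y)) ∧
      ∀ x y i j, (p x y i j : ℂ) = (1 / (d : ℂ)) * (E x i * F y j).trace}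

/-- The set `C_max(nA,nB,m)` of maximally entangled correlations. -/
def Cmax (nA nB m : ℕ) : Set (Fin nA → Fin nB → Fin m → Fin m → ℝ) :=
  ⋃ (d : ℕ) (_ : 1 ≤ d), CmaxD nA nB m d

/-- A correlation with the same questions for Alice and Bob is synchronous if
`p x x i j = 0` whenever `i ≠ j`. -/
def Synchronous {n m : ℕ} (p : Fin n → Fin n → Fin m → Fin m → ℝ) : Prop :=
  ∀ x i j, i ≠ j → p x x i j = 0

/-- The set `C_max^s(n,m)` of synchronous maximally entangled correlations. -/
def CmaxSync (n m : ℕ) : Set (Fin n → Fin n → Fin m → Fin m → ℝ) :=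
  {p ∈ Cmax n n m | Synchronous p}

open scoped ComplexOrder in
/-- A positive operator-valued measure with `m` outcomes on `ℂ^d`. -/
def IsPOVM {d m : ℕ} (P : Fin m → Matrix (Fin d) (Fin d) ℂ) : Prop :=
  (∀ i, (P i).PosSemidef) ∧ (∑ i, P i = 1)

/-- The set `C'_max(nA,nB,m)` of almost maximally entangled correlations. -/
def CmaxPrime (nA nB m : ℕ) : Set (Fin nA → Fin nB → Fin m → Fin m → ℝ) :=
  {p | IsCorrelation p ∧
    ∃ (d : ℕ) (_ : 1 ≤ d)
      (P : Fin nA → Fin m → Matrix (Fin d) (Fin d) ℂ)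
      (Q : Fin nB → Fin m → Matrix (Fin d) (Fin d) ℂ),
      (∀ x, IsPOVM (P x)) ∧ (∀ y, IsPOVM (Q y)) ∧
      ∀ x y i j, (p x y i j : ℂ) = (1 / (d : ℂ)) * (P x i * Q y j).trace}

/-!
A two-outcome POVM is `{A, 1 - A}` with `0 ≤ A ≤ 1`. Thresholding the spectrum of `A` at the
levels `k / N`, `k < N`, gives commuting projections `E_k` with `∑ E_k = N • A + X`,
`0 ≤ X ≤ 1`. On `ℂ^d ⊗ ℂ^N ⊗ ℂ^N`, let Alice measure `E_k` on the block `(k, l)` and Bob the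
analogous `F_l`; these are PVMs, and the normalized trace of a product of them is
`Tr ((∑ E_k) (∑ F_l)) / (d N²)`. Since `|Tr (X T)| ≤ Tr T` whenever `-1 ≤ X ≤ 1` and `0 ≤ T`,
this differs from `Tr (A B) / d` by at most `2 / N`.
-/

open Matrix Filter Topology
open scoped MatrixOrder ComplexOrder

namespace Matrix

variable {n : Type*} [Fintype n]

lemma re_trace_le_re_trace {A B : Matrix n n ℂ} (h : A ≤ B) : A.trace.re ≤ B.trace.re := by
  simpa using (Complex.le_def.1 (nonneg_iff_posSemidef.1 (sub_nonneg.2 h)).trace_nonneg).1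

lemma trace_reindex {κ : Type*} [Fintype κ] (e : n ≃ κ) (M : Matrix n n ℂ) :
    (reindex e e M).trace = M.trace :=
  Fintype.sum_equiv e.symm _ _ fun _ => rfl

variable [DecidableEq n]

lemma trace_mul_nonneg {A B : Matrix n n ℂ} (hA : 0 ≤ A) (hB : 0 ≤ B) : 0 ≤ (A * B).trace := by
  have hconj : 0 ≤ CFC.sqrt A * B * CFC.sqrt A := by
    simpa [(CFC.sqrt_nonneg A).isSelfAdjoint.star_eq] using
      star_left_conjugate_nonneg hB (CFC.sqrt A)
  calc 0 ≤ (CFC.sqrt A * B * CFC.sqrt A).trace := (nonneg_iff_posSemidef.1 hconj).trace_nonneg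
    _ = (A * B).trace := by
      rw [trace_mul_cycle, CFC.sqrt_mul_sqrt_self A hA]

lemma abs_re_trace_mul_le {X C : Matrix n n ℂ} (hC : 0 ≤ C) (hX : X ∈ Set.Icc (-1) 1) :
    |(X * C).trace.re| ≤ C.trace.re := by
  have hlow := Complex.le_def.1 (trace_mul_nonneg (neg_le_iff_add_nonneg.1 hX.1) hC)
  have hupp := Complex.le_def.1 (trace_mul_nonneg (sub_nonneg.2 hX.2) hC)
  simp only [add_mul, sub_mul, one_mul, trace_add, trace_sub, Complex.add_re,
    Complex.sub_re, Complex.zero_re] at hlow hupp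
  exact abs_le.2 ⟨by linarith [hlow.1], by linarith [hupp.1]⟩

lemma abs_re_trace_mul_sub_le {A B S T : Matrix n n ℂ} {N : ℕ}
    (hA : A ∈ Set.Icc 0 1) (hT : T ∈ Set.Icc 0 ((N : ℝ) • 1))
    (hSA : S - (N : ℝ) • A ∈ Set.Icc (-1) 1) (hTB : T - (N : ℝ) • B ∈ Set.Icc (-1) 1) :
    |(S * T).trace.re - N ^ 2 * (A * B).trace.re| ≤ 2 * N * Fintype.card n := by
  have hsplit : (S * T).trace.re - N ^ 2 * (A * B).trace.re
      = ((S - (N : ℝ) • A) * T).trace.re + N * ((T - (N : ℝ) • B) * A).trace.re := by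
    simp only [sub_mul, smul_mul_assoc, trace_sub, trace_smul, Complex.sub_re,
      Complex.real_smul, Complex.re_ofReal_mul, trace_mul_comm T A, trace_mul_comm B A]
    ring
  have hfirst : |((S - (N : ℝ) • A) * T).trace.re| ≤ N * Fintype.card n := by
    refine (abs_re_trace_mul_le hT.1 hSA).trans ?_
    simpa using re_trace_le_re_trace hT.2
  have hsecond : |((T - (N : ℝ) • B) * A).trace.re| ≤ Fintype.card n := by
    refine (abs_re_trace_mul_le hA.1 hTB).trans ?_
    simpa using re_trace_le_re_trace hA.2
  rw [hsplit]
  calc _ ≤ |((S - (N : ℝ) • A) * T).trace.re| + |N * ((T - (N : ℝ) • B) * A).trace.re| :=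
        abs_add_le _ _
    _ = |((S - (N : ℝ) • A) * T).trace.re| + N * |((T - (N : ℝ) • B) * A).trace.re| := by
        rw [abs_mul, Nat.abs_cast]
    _ ≤ N * Fintype.card n + N * Fintype.card n := by gcongr
    _ = 2 * N * Fintype.card n := by ring

end Matrix

section Measurements

variable {d m : ℕ}

lemma IsPOVM.nonneg {P : Fin m → Matrix (Fin d) (Fin d) ℂ} (hP : IsPOVM P) (i : Fin m) :
    0 ≤ P i :=
  nonneg_iff_posSemidef.2 (hP.1 i)

lemma IsPOVM.le_one {P : Fin m → Matrix (Fin d) (Fin d) ℂ} (hP : IsPOVM P) (i : Fin m) :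
    P i ≤ 1 :=
  hP.2 ▸ Finset.single_le_sum (fun j _ => hP.nonneg j) (Finset.mem_univ i)

lemma IsPVM.isPOVM {E : Fin m → Matrix (Fin d) (Fin d) ℂ} (hE : IsPVM E) : IsPOVM E :=
  ⟨fun i => nonneg_iff_posSemidef.1 (IsStarProjection.nonneg ⟨hE.2.1 i, hE.1 i⟩), hE.2.2⟩

lemma IsStarProjection.isPVM_pair {E : Matrix (Fin d) (Fin d) ℂ} (hE : IsStarProjection E) :
    IsPVM ![E, 1 - E] := by
  refine ⟨Fin.forall_fin_two.2 ⟨hE.isSelfAdjoint, hE.one_sub.isSelfAdjoint⟩,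
    Fin.forall_fin_two.2 ⟨hE.isIdempotentElem, hE.one_sub.isIdempotentElem⟩, ?_⟩
  simp [Fin.sum_univ_two]

end Measurements

section SpectralProjection

variable {n : Type*} [Fintype n] [DecidableEq n]

noncomputable def spectralProjGT (r : ℝ) (A : Matrix n n ℂ) : Matrix n n ℂ :=
  cfc (fun t => if r < t then (1 : ℝ) else 0) A

lemma isStarProjection_spectralProjGT (r : ℝ) (A : Matrix n n ℂ) :
    IsStarProjection (spectralProjGT r A) := by
  refine ⟨?_, cfc_predicate _ A⟩
  rw [IsIdempotentElem, spectralProjGT,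
    ← cfc_mul _ _ A (A.finite_real_spectrum.continuousOn _) (A.finite_real_spectrum.continuousOn _)]
  congr! 2 with t
  split_ifs <;> simp

lemma sum_ite_div_lt_sub_mem_Icc (N : ℕ) {t : ℝ} (ht₀ : 0 ≤ t) (ht₁ : t ≤ 1) :
    (∑ k : Fin N, if (k : ℝ) / N < t then (1 : ℝ) else 0) - N * t ∈ Set.Icc 0 1 := by
  have hcount : (∑ k : Fin N, if (k : ℝ) / N < t then (1 : ℝ) else 0) = ⌈N * t⌉₊ := by
    rw [Fin.sum_univ_eq_sum_range (fun k => if (k : ℝ) / N < t then (1 : ℝ) else 0),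
      Finset.sum_boole, ← Finset.card_range ⌈N * t⌉₊]
    congr 2
    ext k
    rcases N.eq_zero_or_pos with rfl | hN
    · simp
    have hNt : (N : ℝ) * t ≤ N := mul_le_of_le_one_right (Nat.cast_nonneg N) ht₁
    rw [Finset.mem_filter, Finset.mem_range, Finset.mem_range, div_lt_iff₀ (by positivity),
      mul_comm t, Nat.lt_ceil]
    exact ⟨And.right, fun hk => ⟨by exact_mod_cast hk.trans_le hNt, hk⟩⟩
  rw [hcount]
  have hceil := Nat.ceil_lt_add_one (by positivity : 0 ≤ (N : ℝ) * t)
  exact ⟨sub_nonneg.2 (Nat.le_ceil _), by linarith⟩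

lemma sum_spectralProjGT_sub_smul_mem_Icc {A : Matrix n n ℂ} (hA : A ∈ Set.Icc 0 1)
    (N : ℕ) :
    ∑ k : Fin N, spectralProjGT ((k : ℝ) / N) A - (N : ℝ) • A ∈ Set.Icc 0 1 := by
  have hspec : ∀ t ∈ spectrum ℝ A, 0 ≤ t ∧ t ≤ 1 := fun t ht =>
    ⟨spectrum_nonneg_of_nonneg hA.1 ht,
      (le_algebraMap_iff_spectrum_le (r := 1)).1 (by simpa using hA.2) t ht⟩
  have hcfc : ∑ k : Fin N, spectralProjGT ((k : ℝ) / N) A - (N : ℝ) • A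
      = cfc (fun t => (∑ k : Fin N, if (k : ℝ) / N < t then (1 : ℝ) else 0) - N * t) A := by
    rw [cfc_sub _ _ A (A.finite_real_spectrum.continuousOn _), cfc_const_mul_id _ A,
      ← Finset.sum_fn, cfc_sum_univ _ A fun k => A.finite_real_spectrum.continuousOn _]
    rfl
  rw [hcfc]
  exact ⟨cfc_nonneg fun t ht => (sum_ite_div_lt_sub_mem_Icc N (hspec t ht).1 (hspec t ht).2).1,
    cfc_le_one _ _ fun t ht => (sum_ite_div_lt_sub_mem_Icc N (hspec t ht).1 (hspec t ht).2).2⟩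

end SpectralProjection

lemma IsPOVM.exists_isPVM_sum_sub_smul_mem_Icc {d : ℕ} {P : Fin 2 → Matrix (Fin d) (Fin d) ℂ}
    (hP : IsPOVM P) (N : ℕ) :
    ∃ E : Fin N → Fin 2 → Matrix (Fin d) (Fin d) ℂ, (∀ k, IsPVM (E k)) ∧
      ∀ i, ∑ k, E k i - (N : ℝ) • P i ∈ Set.Icc (-1) 1 := by
  set E := fun k : Fin N => spectralProjGT ((k : ℝ) / N) (P 0)
  obtain ⟨h₀, h₁⟩ := sum_spectralProjGT_sub_smul_mem_Icc ⟨hP.nonneg 0, hP.le_one 0⟩ N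
  refine ⟨fun k => ![E k, 1 - E k], fun k => (isStarProjection_spectralProjGT _ _).isPVM_pair,
    Fin.forall_fin_two.2 ⟨⟨(neg_nonpos.2 zero_le_one).trans h₀, h₁⟩, ?_⟩⟩
  have hP₁ : P 1 = 1 - P 0 := eq_sub_of_add_eq' (by simpa [Fin.sum_univ_two] using hP.2)
  have hneg : ∑ k, (1 - E k) - (N : ℝ) • P 1 = -(∑ k, E k - (N : ℝ) • P 0) := by
    simp only [Finset.sum_sub_distrib, Finset.sum_const, Finset.card_univ, Fintype.card_fin, hP₁]
    rw [← Nat.cast_smul_eq_nsmul ℝ]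
    module
  simp only [Matrix.cons_val_one, Matrix.cons_val_zero, hneg]
  exact ⟨neg_le_neg h₁, (neg_nonpos.2 h₀).trans zero_le_one⟩

section BlockDilation

variable {d D m : ℕ} {o : Type*} [Fintype o] [DecidableEq o]

noncomputable def blockDilation (e : Fin d × o ≃ Fin D)
    (E : o → Fin m → Matrix (Fin d) (Fin d) ℂ) (i : Fin m) : Matrix (Fin D) (Fin D) ℂ :=
  reindexAlgEquiv ℂ ℂ e (blockDiagonal fun k => E k i)

lemma isPVM_blockDilation (e : Fin d × o ≃ Fin D) {E : o → Fin m → Matrix (Fin d) (Fin d) ℂ}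
    (hE : ∀ k, IsPVM (E k)) : IsPVM (blockDilation e E) := by
  refine ⟨fun i => ?_, fun i => ?_, ?_⟩
  · refine IsHermitian.reindex ?_ e
    rw [IsHermitian, blockDiagonal_conjTranspose]
    exact congrArg blockDiagonal (funext fun k => (hE k).1 i)
  · rw [blockDilation, ← map_mul, ← blockDiagonal_mul]
    exact congrArg _ (congrArg blockDiagonal (funext fun k => (hE k).2.1 i))
  · simp_rw [blockDilation, ← map_sum, ← blockDiagonalAddMonoidHom_apply, ← map_sum]
    rw [← map_one (reindexAlgEquiv ℂ ℂ e), ← blockDiagonal_one]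
    exact congrArg _ (congrArg blockDiagonal (funext fun k => by simpa using (hE k).2.2))

lemma trace_blockDilation_mul_blockDilation {κ : Type*} [Fintype κ] [DecidableEq κ]
    (e : Fin d × (κ × κ) ≃ Fin D) (E F : κ → Fin m → Matrix (Fin d) (Fin d) ℂ) (i j : Fin m) :
    (blockDilation e (fun kl => E kl.1) i * blockDilation e (fun kl => F kl.2) j).trace
      = ((∑ k, E k i) * ∑ l, F l j).trace := by
  rw [blockDilation, blockDilation, ← map_mul, coe_reindexAlgEquiv, trace_reindex,
    ← blockDiagonal_mul, trace_blockDiagonal, Fintype.sum_prod_type, Finset.sum_mul_sum]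
  simp_rw [trace_sum]

end BlockDilation

section TraceCorrelation

variable {nA nB m d : ℕ}

noncomputable def traceCorrelation (P : Fin nA → Fin m → Matrix (Fin d) (Fin d) ℂ)
    (Q : Fin nB → Fin m → Matrix (Fin d) (Fin d) ℂ) : Fin nA → Fin nB → Fin m → Fin m → ℝ :=
  fun x y i j => ((1 / (d : ℂ)) * (P x i * Q y j).trace).re

variable {P : Fin nA → Fin m → Matrix (Fin d) (Fin d) ℂ}
  {Q : Fin nB → Fin m → Matrix (Fin d) (Fin d) ℂ}

lemma one_div_mul_trace_mul_nonneg (hP : ∀ x, IsPOVM (P x)) (hQ : ∀ y, IsPOVM (Q y))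
    (x : Fin nA) (y : Fin nB) (i j : Fin m) :
    0 ≤ (1 / (d : ℂ)) * (P x i * Q y j).trace :=
  mul_nonneg (by simp) (trace_mul_nonneg ((hP x).nonneg i) ((hQ y).nonneg j))

lemma ofReal_traceCorrelation (hP : ∀ x, IsPOVM (P x)) (hQ : ∀ y, IsPOVM (Q y))
    (x : Fin nA) (y : Fin nB) (i j : Fin m) :
    (traceCorrelation P Q x y i j : ℂ) = (1 / (d : ℂ)) * (P x i * Q y j).trace :=
  (Complex.eq_re_of_ofReal_le (r := 0)
    (by exact_mod_cast one_div_mul_trace_mul_nonneg hP hQ x y i j)).symm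

lemma isCorrelation_traceCorrelation (hd : d ≠ 0) (hP : ∀ x, IsPOVM (P x))
    (hQ : ∀ y, IsPOVM (Q y)) : IsCorrelation (traceCorrelation P Q) := by
  refine ⟨fun x y i j => (Complex.le_def.1 (one_div_mul_trace_mul_nonneg hP hQ x y i j)).1,
    fun x y => ?_⟩
  have htrace : ∑ i, ∑ j, (P x i * Q y j).trace = d := by
    simp_rw [← trace_sum, ← Finset.mul_sum, ← Finset.sum_mul, (hP x).2, (hQ y).2]
    simp
  simp_rw [traceCorrelation, ← Complex.re_sum, ← Finset.mul_sum, htrace]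
  simp [hd]

lemma traceCorrelation_mem_Cmax (hd : 1 ≤ d) (hP : ∀ x, IsPVM (P x)) (hQ : ∀ y, IsPVM (Q y)) :
    traceCorrelation P Q ∈ Cmax nA nB m :=
  Set.mem_iUnion₂.2 ⟨d, hd, isCorrelation_traceCorrelation (by omega) (fun x => (hP x).isPOVM)
    (fun y => (hQ y).isPOVM), P, Q, hP, hQ,
    ofReal_traceCorrelation (fun x => (hP x).isPOVM) (fun y => (hQ y).isPOVM)⟩

end TraceCorrelation

lemma exists_mem_Cmax_abs_sub_traceCorrelation_le {nA nB d N : ℕ} (hd : 1 ≤ d) (hN : 0 < N)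
    {P : Fin nA → Fin 2 → Matrix (Fin d) (Fin d) ℂ} {Q : Fin nB → Fin 2 → Matrix (Fin d) (Fin d) ℂ}
    (hP : ∀ x, IsPOVM (P x)) (hQ : ∀ y, IsPOVM (Q y)) :
    ∃ q ∈ Cmax nA nB 2, ∀ x y i j, |q x y i j - traceCorrelation P Q x y i j| ≤ 2 / N := by
  choose E hE hEP using fun x => (hP x).exists_isPVM_sum_sub_smul_mem_Icc N
  choose F hF hFQ using fun y => (hQ y).exists_isPVM_sum_sub_smul_mem_Icc N
  let e : Fin d × (Fin N × Fin N) ≃ Fin (d * (N * N)) :=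
    ((Equiv.refl _).prodCongr finProdFinEquiv).trans finProdFinEquiv
  refine ⟨traceCorrelation (fun x => blockDilation e fun kl => E x kl.1)
      (fun y => blockDilation e fun kl => F y kl.2),
    traceCorrelation_mem_Cmax (Nat.mul_pos hd (Nat.mul_pos hN hN))
      (fun x => isPVM_blockDilation e fun kl => hE x kl.1)
      (fun y => isPVM_blockDilation e fun kl => hF y kl.2), fun x y i j => ?_⟩
  have hT : ∑ l, F y l j ∈ Set.Icc 0 ((N : ℝ) • 1) := by
    refine ⟨Finset.sum_nonneg fun l _ => (hF y l).isPOVM.nonneg j, ?_⟩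
    simpa [Nat.cast_smul_eq_nsmul] using
      Finset.sum_le_card_nsmul Finset.univ _ 1 fun l _ => (hF y l).isPOVM.le_one j
  have hest := abs_re_trace_mul_sub_le ⟨(hP x).nonneg i, (hP x).le_one i⟩ hT (hEP x i) (hFQ y j)
  rw [Fintype.card_fin] at hest
  simp only [traceCorrelation, trace_blockDilation_mul_blockDilation, one_div,
    ← Complex.ofReal_natCast, ← Complex.ofReal_inv, Complex.re_ofReal_mul]
  generalize ((∑ k, E x k i) * ∑ l, F y l j).trace.re = a at hest ⊢
  generalize (P x i * Q y j).trace.re = b at hest ⊢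
  have hd' : (0 : ℝ) < d := by exact_mod_cast hd
  have hN' : (0 : ℝ) < N := by exact_mod_cast hN
  rw [show ((d * (N * N) : ℕ) : ℝ)⁻¹ * a - (d : ℝ)⁻¹ * b = (a - N ^ 2 * b) / (d * N ^ 2) by
    push_cast; field_simp, abs_div,
    abs_of_pos (by positivity : (0 : ℝ) < d * N ^ 2), div_le_iff₀ (by positivity)]
  calc _ ≤ 2 * (N : ℝ) * d := hest
    _ = 2 / (N : ℝ) * (d * (N : ℝ) ^ 2) := by field_simp

/-- STATEMENT 18: for two outcomes, `C_max(nA,nB,2)` is dense in `C'_max(nA,nB,2)`. -/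
theorem CmaxPrime_subset_closure_Cmax_two_outcomes (nA nB : ℕ) :
    CmaxPrime nA nB 2 ⊆ closure (Cmax nA nB 2) := by
  rintro p ⟨-, d, hd, P, Q, hP, hQ, hp⟩
  obtain rfl : p = traceCorrelation P Q := by
    ext x y i j
    exact (Complex.ofReal_re _).symm.trans (congrArg Complex.re (hp x y i j))
  choose q hqC hq using fun N : ℕ =>
    exists_mem_Cmax_abs_sub_traceCorrelation_le hd N.succ_pos hP hQ
  have hbound : Tendsto (fun N : ℕ => 2 / ((N + 1 : ℕ) : ℝ)) atTop (𝓝 0) :=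
    (tendsto_const_div_atTop_nhds_zero_nat 2).comp (tendsto_add_atTop_nat 1)
  refine mem_closure_of_tendsto (b := atTop) ?_ (Eventually.of_forall hqC)
  refine tendsto_pi_nhds.2 fun x => tendsto_pi_nhds.2 fun y =>
    tendsto_pi_nhds.2 fun i => tendsto_pi_nhds.2 fun j => ?_
  exact tendsto_iff_norm_sub_tendsto_zero.2
    (squeeze_zero (fun _ => norm_nonneg _) (fun N => hq N x y i j) hbound)
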